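/- Let Q be a closed form in the wide sense. (a) If A ⊆ X is Q-invariant and B ⊆ A is Q_A-invariant, then B is Q-invariant. (b) If B ⊆ X is Q-invariant and A ⊆ X is any measurable set, then B ∩ A is Q_A-invariant, in the sense that for every g ∈ D(Q_A) we have g·1_{A∩B} ∈ D(Q_A), g·1_{A∖B} ∈ D(Q_A), and Q_A(g·1_{A∩B}, g·1_{A∖B}) = 0. -/

import Mathlib

open MeasureTheory Filter Topology RealInnerProductSpace

noncomputable section

variable {X : Type*} [MeasurableSpace X]

open scoped Classical in
/-- Multiplication by the indicator function of a set `A`, as a map on `L²`. -/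
def indMul {μ : Measure X} (A : Set X) (f : Lp ℝ 2 μ) : Lp ℝ 2 μ :=
  if h : MeasurableSet A then ((Lp.memLp f).indicator h).toLp else 0

/-- A closed (nonnegative, symmetric) quadratic form in the wide sense on `L²(X,m)`:
its domain is a not necessarily dense subspace which is complete in the form norm. -/
structure WideForm (μ : Measure X) where
  dom : Submodule ℝ (Lp ℝ 2 μ)
  Q : Lp ℝ 2 μ → Lp ℝ 2 μ → ℝ
  symm : ∀ u v, Q u v = Q v u
  add_left : ∀ u v w, Q (u + v) w = Q u w + Q v w
  smul_left : ∀ (c : ℝ) u v, Q (c • u) v = c * Q u v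
  nonneg : ∀ u, 0 ≤ Q u u
  closed : ∀ f : ℕ → Lp ℝ 2 μ, (∀ n, f n ∈ dom) →
    (∀ ε > 0, ∃ N, ∀ m ≥ N, ∀ n ≥ N,
      Q (f m - f n) (f m - f n) + ‖f m - f n‖ ^ 2 < ε) →
    ∃ g ∈ dom, Tendsto (fun n => Q (f n - g) (f n - g) + ‖f n - g‖ ^ 2) atTop (nhds 0)

/-- `G` is the resolvent family of the closed form `T`. -/
def WideForm.IsResolvent {μ : Measure X} (T : WideForm μ)
    (G : ℝ → Lp ℝ 2 μ →L[ℝ] Lp ℝ 2 μ) : Prop :=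
  ∀ α > 0, ∀ u, G α u ∈ T.dom ∧
    ∀ v ∈ T.dom, T.Q (G α u) v + α * ⟪G α u, v⟫ = ⟪u, v⟫

/-- `T` is positivity preserving. -/
def WideForm.PosPres {μ : Measure X} (T : WideForm μ) : Prop :=
  ∀ u ∈ T.dom, |u| ∈ T.dom ∧ T.Q |u| |u| ≤ T.Q u u

/-- `A` is invariant for the resolvent family `G`. -/
def ResInvariant {μ : Measure X} (G : ℝ → Lp ℝ 2 μ →L[ℝ] Lp ℝ 2 μ) (A : Set X) : Prop :=
  MeasurableSet A ∧ ∀ α > 0, ∀ f, G α (indMul A f) = indMul A (G α f)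

/-!
Closedness makes the form domain a Hilbert space `H` for `Q₁(u, v) = Q(u, v) + ⟪u, v⟫`. Given a
`Q`-invariant `B` and `u ∈ D(Q)`, split `u = p + q` orthogonally in `H`, with `p` in the closed
subspace of elements vanishing off `B`. This subspace contains `G₁(1_B q)`, so
`‖1_B q‖² = ⟪1_B q, q⟫ = Q₁(G₁(1_B q), q) = 0`. Hence `1_B u = p` and `1_{Bᶜ} u = q` lie in `D(Q)`,
and `Q(p, q) = Q₁(p, q) - ⟪p, q⟫ = 0`. Part (a) is uniqueness of the resolvent: on functions
supported in a `Q`-invariant `A`, the resolvents of `Q` and `Q_A` agree.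
-/

section IndMul

variable {μ : Measure X} {A B : Set X}

lemma indMul_coeFn (hA : MeasurableSet A) (f : Lp ℝ 2 μ) :
    indMul A f =ᵐ[μ] A.indicator f := by
  rw [indMul, dif_pos hA]
  exact MemLp.coeFn_toLp _

lemma indMul_indMul (hA : MeasurableSet A) (hB : MeasurableSet B) (f : Lp ℝ 2 μ) :
    indMul A (indMul B f) = indMul (A ∩ B) f := by
  classical
  apply Lp.ext
  filter_upwards [indMul_coeFn hA (indMul B f), indMul_coeFn (hA.inter hB) f,
    indMul_coeFn hB f] with x hAB hAB' hBf
  rw [hAB, hAB', Set.indicator_apply, Set.indicator_apply, hBf, Set.indicator_apply]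
  by_cases hxA : x ∈ A <;> simp [hxA]

lemma indMul_comm (hA : MeasurableSet A) (hB : MeasurableSet B) (f : Lp ℝ 2 μ) :
    indMul A (indMul B f) = indMul B (indMul A f) := by
  rw [indMul_indMul hA hB, indMul_indMul hB hA, Set.inter_comm]

lemma indMul_empty (f : Lp ℝ 2 μ) : indMul (∅ : Set X) f = 0 := by
  apply Lp.ext
  filter_upwards [indMul_coeFn MeasurableSet.empty f, Lp.coeFn_zero ℝ 2 μ] with x h h0
  rw [h, h0, Set.indicator_empty, Pi.zero_apply]

lemma indMul_add_indMul_compl (hA : MeasurableSet A) (f : Lp ℝ 2 μ) :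
    indMul A f + indMul Aᶜ f = f := by
  apply Lp.ext
  filter_upwards [Lp.coeFn_add (indMul A f) (indMul Aᶜ f), indMul_coeFn hA f,
    indMul_coeFn hA.compl f] with x hadd hAf hAcf
  rw [hadd, Pi.add_apply, hAf, hAcf, Set.indicator_self_add_compl_apply]

lemma indMul_idem (hA : MeasurableSet A) (f : Lp ℝ 2 μ) : indMul A (indMul A f) = indMul A f := by
  rw [indMul_indMul hA hA, Set.inter_self]

lemma indMul_compl_indMul (hA : MeasurableSet A) (f : Lp ℝ 2 μ) : indMul Aᶜ (indMul A f) = 0 := by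
  rw [indMul_indMul hA.compl hA, Set.compl_inter_self, indMul_empty]

lemma indMul_indMul_of_subset (hBA : B ⊆ A) (hA : MeasurableSet A) (hB : MeasurableSet B)
    (f : Lp ℝ 2 μ) : indMul A (indMul B f) = indMul B f := by
  rw [indMul_indMul hA hB, Set.inter_eq_right.mpr hBA]

lemma indMul_indMul_of_superset (hBA : B ⊆ A) (hA : MeasurableSet A) (hB : MeasurableSet B)
    (f : Lp ℝ 2 μ) : indMul B (indMul A f) = indMul B f := by
  rw [indMul_comm hB hA, indMul_indMul_of_subset hBA hA hB]

lemma indMul_eq_self_of_indMul_compl_eq_zero (hA : MeasurableSet A) {f : Lp ℝ 2 μ}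
    (hf : indMul Aᶜ f = 0) : indMul A f = f := by
  simpa [hf] using indMul_add_indMul_compl hA f

lemma indMul_inter_of_indMul_compl_eq_zero (hA : MeasurableSet A) (hB : MeasurableSet B)
    {f : Lp ℝ 2 μ} (hf : indMul Aᶜ f = 0) : indMul (A ∩ B) f = indMul B f := by
  rw [Set.inter_comm, ← indMul_indMul hB hA, indMul_eq_self_of_indMul_compl_eq_zero hA hf]

lemma indMul_add (hA : MeasurableSet A) (f g : Lp ℝ 2 μ) :
    indMul A (f + g) = indMul A f + indMul A g := by
  classical
  apply Lp.ext
  filter_upwards [indMul_coeFn hA (f + g), Lp.coeFn_add (indMul A f) (indMul A g),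
    indMul_coeFn hA f, indMul_coeFn hA g, Lp.coeFn_add f g] with x h hadd hf hg hfg
  rw [h, hadd, Pi.add_apply, hf, hg, Set.indicator_apply, Set.indicator_apply,
    Set.indicator_apply, hfg]
  by_cases hx : x ∈ A <;> simp [hx]

lemma indMul_smul (hA : MeasurableSet A) (c : ℝ) (f : Lp ℝ 2 μ) :
    indMul A (c • f) = c • indMul A f := by
  classical
  apply Lp.ext
  filter_upwards [indMul_coeFn hA (c • f), Lp.coeFn_smul c (indMul A f),
    indMul_coeFn hA f, Lp.coeFn_smul c f] with x h hsmul hf hcf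
  rw [h, hsmul, Pi.smul_apply, hf, Set.indicator_apply, Set.indicator_apply, hcf]
  by_cases hx : x ∈ A <;> simp [hx]

lemma norm_indMul_le (hA : MeasurableSet A) (f : Lp ℝ 2 μ) : ‖indMul A f‖ ≤ ‖f‖ := by
  apply Lp.norm_le_norm_of_ae_le
  filter_upwards [indMul_coeFn hA f] with x h
  rw [h]
  exact norm_indicator_le_norm_self _ _

lemma inner_indMul_left (hA : MeasurableSet A) (f g : Lp ℝ 2 μ) :
    ⟪indMul A f, g⟫ = ⟪f, indMul A g⟫ := by
  rw [L2.inner_def, L2.inner_def]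
  apply integral_congr_ae
  filter_upwards [indMul_coeFn hA f, indMul_coeFn hA g] with x hf hg
  rw [hf, hg]
  by_cases hx : x ∈ A <;> simp [hx]

variable (μ) in
def indMulCLM (hA : MeasurableSet A) : Lp ℝ 2 μ →L[ℝ] Lp ℝ 2 μ :=
  LinearMap.mkContinuous ⟨⟨indMul A, indMul_add hA⟩, indMul_smul hA⟩ 1
    (fun f => by simpa using norm_indMul_le hA f)

lemma indMul_zero (hA : MeasurableSet A) : indMul A (0 : Lp ℝ 2 μ) = 0 :=
  (indMulCLM μ hA).map_zero

end IndMul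

namespace WideForm

variable {μ : Measure X} (T : WideForm μ)

lemma sub_left (u v w : Lp ℝ 2 μ) : T.Q (u - v) w = T.Q u w - T.Q v w := by
  rw [sub_eq_add_neg, ← neg_one_smul ℝ v, T.add_left, T.smul_left]
  ring

variable {T} in
lemma IsResolvent.apply_eq {G : ℝ → Lp ℝ 2 μ →L[ℝ] Lp ℝ 2 μ} (hG : T.IsResolvent G) {α : ℝ}
    (hα : 0 < α) {u w : Lp ℝ 2 μ} (hw : w ∈ T.dom)
    (h : ∀ v ∈ T.dom, T.Q w v + α * ⟪w, v⟫ = ⟪u, v⟫) : G α u = w := by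
  set d := G α u - w
  have hd : d ∈ T.dom := T.dom.sub_mem (hG α hα u).1 hw
  have hdd : T.Q d d + α * ⟪d, d⟫ = 0 := by
    simp only [d, T.sub_left, inner_sub_left]
    linarith [(hG α hα u).2 d hd, h d hd]
  have h0 : ⟪d, d⟫ = 0 := by
    nlinarith [T.nonneg d, real_inner_self_nonneg (x := d)]
  exact sub_eq_zero.mp (inner_self_eq_zero.mp h0)

/-- A type synonym for `T.dom`, so that it can carry the form inner product
`Q₁(u, v) = Q(u, v) + ⟪u, v⟫` instead of the one inherited from `L²`. -/
def FormDomain : Type _ := T.dom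

namespace FormDomain

instance : AddCommGroup T.FormDomain := inferInstanceAs (AddCommGroup T.dom)

instance : Module ℝ T.FormDomain := inferInstanceAs (Module ℝ T.dom)

variable {T}

def toL2 : T.FormDomain →ₗ[ℝ] Lp ℝ 2 μ := T.dom.subtype

def ofMem (u : Lp ℝ 2 μ) (hu : u ∈ T.dom) : T.FormDomain := (⟨u, hu⟩ : T.dom)

@[simp]
lemma toL2_ofMem (u : Lp ℝ 2 μ) (hu : u ∈ T.dom) : toL2 (ofMem u hu) = u := rfl

lemma toL2_mem (x : T.FormDomain) : toL2 x ∈ T.dom := (show T.dom from x).2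

instance : InnerProductSpace.Core ℝ T.FormDomain where
  inner x y := T.Q (toL2 x) (toL2 y) + ⟪toL2 x, toL2 y⟫
  conj_inner_symm x y := by
    simp only [conj_trivial]
    rw [T.symm, real_inner_comm]
  re_inner_nonneg x := add_nonneg (T.nonneg _) real_inner_self_nonneg
  add_left x y z := by
    simp only [map_add, T.add_left, inner_add_left]
    ring
  smul_left x y r := by
    simp only [map_smul, T.smul_left, real_inner_smul_left, conj_trivial]
    ring
  definite x hx := by
    have h0 := T.nonneg (toL2 x)
    have h1 : ⟪toL2 x, toL2 x⟫ = 0 := by linarith [real_inner_self_nonneg (x := toL2 x)]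
    exact Subtype.ext (inner_self_eq_zero.mp h1)

instance : NormedAddCommGroup T.FormDomain :=
  InnerProductSpace.Core.toNormedAddCommGroup (𝕜 := ℝ)

instance : InnerProductSpace ℝ T.FormDomain := InnerProductSpace.ofCore _

lemma inner_def (x y : T.FormDomain) :
    ⟪x, y⟫ = T.Q (toL2 x) (toL2 y) + ⟪toL2 x, toL2 y⟫ := rfl

lemma norm_sq (x : T.FormDomain) : ‖x‖ ^ 2 = T.Q (toL2 x) (toL2 x) + ‖toL2 x‖ ^ 2 := by
  rw [← real_inner_self_eq_norm_sq, ← real_inner_self_eq_norm_sq, inner_def]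

lemma norm_toL2_le (x : T.FormDomain) : ‖toL2 x‖ ≤ ‖x‖ := by
  refine (pow_le_pow_iff_left₀ (norm_nonneg _) (norm_nonneg _) two_ne_zero).mp ?_
  rw [norm_sq]
  linarith [T.nonneg (toL2 x)]

lemma continuous_toL2 : Continuous (toL2 : T.FormDomain → Lp ℝ 2 μ) :=
  AddMonoidHomClass.continuous_of_bound toL2 1 fun x => by simpa using norm_toL2_le x

instance : CompleteSpace T.FormDomain := by
  refine Metric.complete_of_cauchySeq_tendsto fun x hx => ?_
  obtain ⟨u, hu, hlim⟩ := T.closed (fun n => toL2 (x n)) (fun n => toL2_mem (x n)) fun ε hε => by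
    obtain ⟨N, hN⟩ := Metric.cauchySeq_iff.mp hx (√ε) (Real.sqrt_pos.mpr hε)
    refine ⟨N, fun m hm n hn => ?_⟩
    have h := (Real.lt_sqrt dist_nonneg).mp (hN m hm n hn)
    rwa [dist_eq_norm, norm_sq, map_sub] at h
  refine ⟨ofMem u hu, tendsto_iff_norm_sub_tendsto_zero.mpr ?_⟩
  have h := hlim.sqrt
  simp only [Real.sqrt_zero] at h
  convert h using 2 with n
  rw [show toL2 (x n) - u = toL2 (x n - ofMem u hu) by rw [map_sub, toL2_ofMem], ← norm_sq,
    Real.sqrt_sq (norm_nonneg _)]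

variable {G : ℝ → Lp ℝ 2 μ →L[ℝ] Lp ℝ 2 μ} {B : Set X}

variable (T) in
def supportedIn (hB : MeasurableSet B) : Submodule ℝ T.FormDomain :=
  LinearMap.ker ((indMulCLM μ hB.compl).toLinearMap ∘ₗ toL2)

lemma mem_supportedIn {hB : MeasurableSet B} {x : T.FormDomain} :
    x ∈ supportedIn T hB ↔ indMul Bᶜ (toL2 x) = 0 := Iff.rfl

lemma isClosed_supportedIn (hB : MeasurableSet B) :
    IsClosed (supportedIn T hB : Set T.FormDomain) :=
  isClosed_singleton.preimage <| (indMulCLM μ hB.compl).continuous.comp continuous_toL2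

lemma indMul_toL2_eq_zero_of_mem_orthogonal (hG : T.IsResolvent G) (hB : ResInvariant G B)
    {y : T.FormDomain} (hy : y ∈ (supportedIn T hB.1)ᗮ) : indMul B (toL2 y) = 0 := by
  obtain ⟨hGw, hGw_eq⟩ := hG 1 one_pos (indMul B (toL2 y))
  have hz : ofMem _ hGw ∈ supportedIn T hB.1 := by
    rw [mem_supportedIn, toL2_ofMem, hB.2 1 one_pos, indMul_compl_indMul hB.1]
  have h := Submodule.inner_right_of_mem_orthogonal hz hy
  rw [inner_def, toL2_ofMem, ← one_mul ⟪G 1 _, _⟫, hGw_eq _ (toL2_mem y)] at h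
  rwa [← inner_self_eq_zero (𝕜 := ℝ), inner_indMul_left hB.1, indMul_idem hB.1, real_inner_comm]

end FormDomain

/-- `T` is the part `S_A` of `S` on `A`. -/
def IsRestriction (S : WideForm μ) (A : Set X) : Prop :=
  (T.dom : Set (Lp ℝ 2 μ)) = {u | u ∈ S.dom ∧ indMul Aᶜ u = 0} ∧ ∀ u v, T.Q u v = S.Q u v

variable {T} {T' : WideForm μ} {A : Set X}

lemma IsRestriction.mem_dom_iff (hT' : T'.IsRestriction T A) {u : Lp ℝ 2 μ} :
    u ∈ T'.dom ↔ u ∈ T.dom ∧ indMul Aᶜ u = 0 :=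
  Set.ext_iff.mp hT'.1 u

lemma IsRestriction.resolvent_indMul_eq {G G' : ℝ → Lp ℝ 2 μ →L[ℝ] Lp ℝ 2 μ}
    (hT' : T'.IsRestriction T A) (hG : T.IsResolvent G) (hG' : T'.IsResolvent G')
    (hA : ResInvariant G A) {α : ℝ} (hα : 0 < α) (f : Lp ℝ 2 μ) :
    G' α (indMul A f) = G α (indMul A f) := by
  refine hG'.apply_eq hα (hT'.mem_dom_iff.mpr ⟨(hG α hα _).1, ?_⟩) fun v hv => ?_
  · rw [hA.2 α hα f, indMul_compl_indMul hA.1]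
  · rw [hT'.2]
    exact (hG α hα _).2 v (hT'.mem_dom_iff.mp hv).1

lemma IsRestriction.indMul_mem (hT' : T'.IsRestriction T A) (hA : MeasurableSet A)
    {C : Set X} (hC : MeasurableSet C) {g : Lp ℝ 2 μ} (hg : g ∈ T'.dom)
    (hCg : indMul C g ∈ T.dom) : indMul C g ∈ T'.dom := by
  refine hT'.mem_dom_iff.mpr ⟨hCg, ?_⟩
  rw [indMul_comm hA.compl hC, (hT'.mem_dom_iff.mp hg).2, indMul_zero hC]

end WideForm

namespace ResInvariant

open WideForm FormDomain

variable {μ : Measure X} {T T' : WideForm μ} {G G' : ℝ → Lp ℝ 2 μ →L[ℝ] Lp ℝ 2 μ} {A B : Set X}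

theorem indMul_mem_dom_and_Q_eq_zero (hB : ResInvariant G B) (hG : T.IsResolvent G)
    {u : Lp ℝ 2 μ} (hu : u ∈ T.dom) :
    indMul B u ∈ T.dom ∧ indMul Bᶜ u ∈ T.dom ∧ T.Q (indMul B u) (indMul Bᶜ u) = 0 := by
  have : CompleteSpace (supportedIn T hB.1) := (isClosed_supportedIn hB.1).completeSpace_coe
  obtain ⟨p, hp, q, hq, hpq⟩ := (supportedIn T hB.1).exists_add_mem_mem_orthogonal (ofMem u hu)
  have hu_eq : u = toL2 p + toL2 q := by rw [← map_add, ← hpq, toL2_ofMem]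
  have hBq : indMul B (toL2 q) = 0 := indMul_toL2_eq_zero_of_mem_orthogonal hG hB hq
  have hBu : indMul B u = toL2 p := by
    rw [hu_eq, indMul_add hB.1, hBq, add_zero,
      indMul_eq_self_of_indMul_compl_eq_zero hB.1 (mem_supportedIn.mp hp)]
  have hBcu : indMul Bᶜ u = toL2 q := by
    rw [hu_eq, indMul_add hB.1.compl, mem_supportedIn.mp hp, zero_add,
      indMul_eq_self_of_indMul_compl_eq_zero hB.1.compl (by rwa [compl_compl])]
  refine ⟨hBu ▸ toL2_mem p, hBcu ▸ toL2_mem q, ?_⟩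
  have horth := Submodule.inner_right_of_mem_orthogonal hp hq
  have hL2 : ⟪indMul B u, indMul Bᶜ u⟫ = 0 := by
    rw [inner_indMul_left hB.1, indMul_indMul hB.1 hB.1.compl, Set.inter_compl_self,
      indMul_empty, inner_zero_right]
  rwa [inner_def, ← hBu, ← hBcu, hL2, add_zero] at horth

theorem of_isRestriction (hA : ResInvariant G A) (hG : T.IsResolvent G)
    (hT' : T'.IsRestriction T A) (hG' : T'.IsResolvent G') (hBA : B ⊆ A)
    (hB : ResInvariant G' B) : ResInvariant G B := by
  refine ⟨hB.1, fun α hα f => ?_⟩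
  have hres := hT'.resolvent_indMul_eq hG hG' hA hα
  calc G α (indMul B f)
      = G α (indMul A (indMul B f)) := by rw [indMul_indMul_of_subset hBA hA.1 hB.1]
    _ = G' α (indMul B (indMul A f)) := by
        rw [← hres, indMul_indMul_of_subset hBA hA.1 hB.1,
          indMul_indMul_of_superset hBA hA.1 hB.1]
    _ = indMul B (indMul A (G α f)) := by rw [hB.2 α hα, hres, hA.2 α hα]
    _ = indMul B (G α f) := indMul_indMul_of_superset hBA hA.1 hB.1 _

theorem inter_isRestriction (hB : ResInvariant G B) (hG : T.IsResolvent G)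
    (hA : MeasurableSet A) (hT' : T'.IsRestriction T A) {g : Lp ℝ 2 μ} (hg : g ∈ T'.dom) :
    indMul (A ∩ B) g ∈ T'.dom ∧ indMul (A \ B) g ∈ T'.dom ∧
      T'.Q (indMul (A ∩ B) g) (indMul (A \ B) g) = 0 := by
  obtain ⟨hgT, hgA⟩ := hT'.mem_dom_iff.mp hg
  obtain ⟨hBg, hBcg, hQ⟩ := hB.indMul_mem_dom_and_Q_eq_zero hG hgT
  rw [Set.sdiff_eq, indMul_inter_of_indMul_compl_eq_zero hA hB.1 hgA,
    indMul_inter_of_indMul_compl_eq_zero hA hB.1.compl hgA, hT'.2]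
  exact ⟨hT'.indMul_mem hA hB.1 hg hBg, hT'.indMul_mem hA hB.1.compl hg hBcg, hQ⟩

end ResInvariant

/-- (a) a `Q_A`-invariant subset of a `Q`-invariant set `A` is `Q`-invariant;
(b) for `B` `Q`-invariant and `A` measurable, `A ∩ B` is `Q_A`-invariant in the explicit
sense. -/
theorem invariance_transfer {μ : Measure X} (T : WideForm μ)
    (G : ℝ → Lp ℝ 2 μ →L[ℝ] Lp ℝ 2 μ) (hG : T.IsResolvent G) :
    (∀ A : Set X, ResInvariant G A →
      ∀ T' : WideForm μ,
        (T'.dom : Set (Lp ℝ 2 μ)) = {u | u ∈ T.dom ∧ indMul Aᶜ u = 0} →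
        (∀ u v, T'.Q u v = T.Q u v) →
        ∀ G' : ℝ → Lp ℝ 2 μ →L[ℝ] Lp ℝ 2 μ, T'.IsResolvent G' →
        ∀ B : Set X, B ⊆ A → ResInvariant G' B → ResInvariant G B) ∧
    (∀ A B : Set X, MeasurableSet A → ResInvariant G B →
      ∀ T' : WideForm μ,
        (T'.dom : Set (Lp ℝ 2 μ)) = {u | u ∈ T.dom ∧ indMul Aᶜ u = 0} →
        (∀ u v, T'.Q u v = T.Q u v) →
        ∀ g ∈ T'.dom, indMul (A ∩ B) g ∈ T'.dom ∧ indMul (A \ B) g ∈ T'.dom ∧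
          T'.Q (indMul (A ∩ B) g) (indMul (A \ B) g) = 0) :=
  ⟨fun _ hA _ hdom hQ _ hG' _ hBA hB => hA.of_isRestriction hG ⟨hdom, hQ⟩ hG' hBA hB,
    fun _ _ hA hB _ hdom hQ _ hg => hB.inter_isRestriction hG hA ⟨hdom, hQ⟩ hg⟩
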